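/- Swapping deficient vertices preserves optimality: In the setting where G is a finite simple graph with no (a,b)-feasible pair, a, b, h as above with d_G(u) = a(u)+b(u)+h(u) and min{a(u),b(u)} ≥ 1 for all u, let (X_1, X_2) be a degenerate partition maximizing the weight ω and, subject to that, minimizing |X_1|. Suppose u_1 ∈ X_1 with d_{X_1}(u_1) ≤ a(u_1), and u_2 ∈ X_2 with d_{X_2}(u_2) ≤ b(u_2)+h(u_2)−1, and either h(u_1) = h(u_2) = 0 or h(u_1) = 1. Then the swapped partition ((X_1 \ {u_1}) ∪ {u_2}, (X_2 \ {u_2}) ∪ {u_1}) is also a degenerate partition with the same maximum weight and minimum |X_1|; moreover if h(u_1) = 1 then h(u_2) = 1. -/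

import Mathlib

open scoped Classical

/-- `(A, B)` forms an `(a,b)`-feasible pair in `G`. -/
def FeasiblePair {V : Type*} [DecidableEq V] (G : SimpleGraph V) [DecidableRel G.Adj]
    (a b : V → ℕ) : Prop :=
  ∃ A B : Finset V, A.Nonempty ∧ B.Nonempty ∧ Disjoint A B ∧
    (∀ u ∈ A, a u ≤ (A.filter (G.Adj u)).card) ∧
    (∀ v ∈ B, b v ≤ (B.filter (G.Adj v)).card)

/-- Number of edges of `G` with both endpoints in `X`. -/
noncomputable def edgesIn {V : Type*} [Fintype V] [DecidableEq V]
    (G : SimpleGraph V) [DecidableRel G.Adj] (X : Finset V) : ℕ :=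
  (G.edgeFinset.filter (fun e => ∀ v ∈ e, v ∈ X)).card

/-- The weight `ω(X₁, X₂) = e(X₁) + e(X₂) + Σ_{u ∈ X₁} b(u) + Σ_{v ∈ X₂} a(v)`. -/
noncomputable def wt {V : Type*} [Fintype V] [DecidableEq V]
    (G : SimpleGraph V) [DecidableRel G.Adj] (a b : V → ℕ) (X1 X2 : Finset V) : ℕ :=
  edgesIn G X1 + edgesIn G X2 + ∑ u ∈ X1, b u + ∑ v ∈ X2, a v

/-- A degenerate partition: both parts are non-empty, they partition `V(G)`,
`X₁` is 1-meager and `X₂` is 2-meager. -/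
def DegenPartition {V : Type*} [Fintype V] [DecidableEq V]
    (G : SimpleGraph V) [DecidableRel G.Adj] (a b h : V → ℕ) (X1 X2 : Finset V) : Prop :=
  X1.Nonempty ∧ X2.Nonempty ∧ Disjoint X1 X2 ∧ X1 ∪ X2 = Finset.univ ∧
    (∀ X' ⊆ X1, X'.Nonempty → ∃ x ∈ X', (X'.filter (G.Adj x)).card ≤ a x) ∧
    (∀ X' ⊆ X2, X'.Nonempty → ∃ x ∈ X', (X'.filter (G.Adj x)).card + 1 ≤ b x + h x)

/-!
Write `d_X(v)` for the number of neighbours of `v` in `X`. Moving `u₁` from `X₁` to `X₂` changes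
the weight by `2(a(u₁) - d_{X₁}(u₁)) + h(u₁) ≥ h(u₁)`; moving `u₂` from `X₂` to `X₁` changes it by
`2(b(u₂) - d_{X₂}(u₂)) + h(u₂) ≥ 2 - h(u₂) > 0`. The swap is the first move followed by the
second; as the first move raises `d_{X₂}(u₂)` by at most one, the swap gains at least
`h(u₁) - h(u₂) ≥ 0`. Maximality makes the gain zero, which forces `h(u₂) = 1` when `h(u₁) = 1`.

For degeneracy, a set `A` in the new first part in which every vertex has more than `a` neighbours
must contain `u₂`, and then `u₂` has a neighbour in `X₁ - u₁`. The partition `(X₁ - u₁, X₂ + u₁)`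
has weight at least `ω` and a smaller first part, so it is not degenerate: `X₂ + u₁` contains a
set `B` in which every vertex has at least `b + h` neighbours. Counting the degree of `u₂` shows
`u₂ ∉ B`, so `(A, B)` is a feasible pair. The new second part is handled symmetrically, using that
`(X₁ + u₂, X₂ - u₂)` would have larger weight than `ω`.
-/

open Finset

section Cores

variable {V : Type*} (G : SimpleGraph V) [DecidableRel G.Adj]

def IsCore (k : V → ℕ) (S : Finset V) : Prop :=
  S.Nonempty ∧ ∀ x ∈ S, k x ≤ (S.filter (G.Adj x)).card

/- In the paper's terms, `X1` is 1-meager iff `¬HasCore G (a + 1) X1`, `X2` is 2-meager iff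
`¬HasCore G (b + h) X2`, and an `(a,b)`-feasible pair is a disjoint `a`-core and `b`-core. -/
def HasCore (k : V → ℕ) (X : Finset V) : Prop :=
  ∃ S ⊆ X, IsCore G k S

variable {G}

lemma IsCore.mono {k k' : V → ℕ} {S : Finset V} (hk : k ≤ k') (hS : IsCore G k' S) :
    IsCore G k S :=
  ⟨hS.1, fun x hx => (hk x).trans (hS.2 x hx)⟩

lemma HasCore.mono {k : V → ℕ} {X Y : Finset V} (hXY : X ⊆ Y) (hX : HasCore G k X) :
    HasCore G k Y :=
  let ⟨S, hSX, hS⟩ := hX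
  ⟨S, hSX.trans hXY, hS⟩

lemma not_hasCore_iff {k : V → ℕ} {X : Finset V} :
    ¬HasCore G k X ↔ ∀ S ⊆ X, S.Nonempty → ∃ x ∈ S, (S.filter (G.Adj x)).card < k x := by
  simp only [HasCore, IsCore, not_exists, not_and, not_forall, not_le, exists_prop]

variable [DecidableEq V]

lemma IsCore.mem_of_subset_insert {k : V → ℕ} {S X : Finset V} {v : V}
    (hS : IsCore G k S) (hSX : S ⊆ insert v X) (hX : ¬HasCore G k X) : v ∈ S := by
  by_contra hv
  exact hX ⟨S, (subset_insert_iff_of_notMem hv).1 hSX, hS⟩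

lemma IsCore.le_card_filter_of_subset_insert {k : V → ℕ} {S X : Finset V} {v : V}
    (hS : IsCore G k S) (hSX : S ⊆ insert v X) (hv : v ∈ S) :
    k v ≤ (X.filter (G.Adj v)).card := by
  refine (hS.2 v hv).trans (card_le_card fun x hx => ?_)
  obtain ⟨hxS, hvx⟩ := mem_filter.1 hx
  exact mem_filter.2 ⟨(mem_insert.1 (hSX hxS)).resolve_left (G.ne_of_adj hvx).symm, hvx⟩

lemma FeasiblePair.of_isCore {a b : V → ℕ} {A B : Finset V} (hAB : Disjoint A B)
    (hA : IsCore G a A) (hB : IsCore G b B) : FeasiblePair G a b :=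
  ⟨A, B, hA.1, hB.1, hAB, hA.2, hB.2⟩

lemma FeasiblePair.symm {a b : V → ℕ} : FeasiblePair G a b → FeasiblePair G b a :=
  fun ⟨A, B, hA, hB, hAB, hAa, hBb⟩ => ⟨B, A, hB, hA, hAB.symm, hBb, hAa⟩

lemma not_isCore_of_subset_insert_erase {fP fQ kP kQ : V → ℕ} {P Q A : Finset V} {u v : V}
    (hnf : ¬FeasiblePair G fP fQ) (hfP : fP ≤ kP) (hfQ : fQ ≤ kQ) (hPQ : Disjoint P Q)
    (hQ : HasCore G kQ (insert u Q)) (hv : ((insert u Q).filter (G.Adj v)).card < kQ v)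
    (hA : A ⊆ insert v (P.erase u)) : ¬IsCore G kP A := by
  intro hAcore
  obtain ⟨B, hBQ, hB⟩ := hQ
  have hvB : v ∉ B := fun hvB =>
    hv.not_ge ((hB.2 v hvB).trans (card_le_card (filter_subset_filter _ hBQ)))
  refine hnf (.of_isCore (disjoint_left.2 fun x hxA hxB => ?_) (hAcore.mono hfP) (hB.mono hfQ))
  rcases mem_insert.1 (hA hxA) with rfl | hxP
  · exact hvB hxB
  rcases mem_insert.1 (hBQ hxB) with rfl | hxQ
  · exact notMem_erase x P hxP
  · exact disjoint_left.1 hPQ (mem_of_mem_erase hxP) hxQ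

end Cores

section Weights

variable {V : Type*} [Fintype V] [DecidableEq V] {G : SimpleGraph V} [DecidableRel G.Adj]

lemma degree_eq_card_filter_add_card_filter_compl (X : Finset V) (v : V) :
    G.degree v = (X.filter (G.Adj v)).card + (Xᶜ.filter (G.Adj v)).card := by
  rw [← card_union_of_disjoint (disjoint_filter_filter disjoint_compl_right), ← filter_union,
    union_compl, ← G.card_neighborFinset_eq_degree, G.neighborFinset_eq_filter]

lemma edgesIn_insert {X : Finset V} {v : V} (hv : v ∉ X) :
    edgesIn G (insert v X) = edgesIn G X + (X.filter (G.Adj v)).card := by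
  rw [edgesIn, edgesIn, ← card_image_of_injective (X.filter (G.Adj v))
    (f := fun x => s(v, x)) (fun _ _ => Sym2.congr_right.1), ← card_union_of_disjoint]
  · congr 1
    ext e
    induction e using Sym2.ind with | _ x y => ?_
    simp only [mem_filter, mem_union, mem_image, SimpleGraph.mem_edgeFinset,
      SimpleGraph.mem_edgeSet, Sym2.mem_iff, mem_insert, forall_eq_or_imp, forall_eq]
    grind [G.adj_symm, G.irrefl, Sym2.eq_swap]
  · simp only [disjoint_left, mem_filter, mem_image, not_exists, not_and]
    rintro e ⟨-, he⟩ x - rfl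
    exact hv (he v (Sym2.mem_mk_left v x))

lemma edgesIn_erase_add {X : Finset V} {v : V} (hv : v ∈ X) :
    edgesIn G (X.erase v) + (X.filter (G.Adj v)).card = edgesIn G X := by
  have h := edgesIn_insert (G := G) (notMem_erase v X)
  rwa [insert_erase hv, filter_erase, erase_eq_of_notMem (s := X.filter (G.Adj v)) (by simp),
    eq_comm] at h

lemma wt_comm (a b : V → ℕ) (X1 X2 : Finset V) : wt G a b X1 X2 = wt G b a X2 X1 := by
  simp only [wt]
  ring

lemma wt_erase_insert (a b : V → ℕ) {X1 X2 : Finset V} {u : V} (hu1 : u ∈ X1) (hu2 : u ∉ X2) :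
    wt G a b (X1.erase u) (insert u X2) + (X1.filter (G.Adj u)).card + b u =
      wt G a b X1 X2 + (X2.filter (G.Adj u)).card + a u := by
  simp only [wt, edgesIn_insert hu2, sum_insert hu2, ← edgesIn_erase_add hu1,
    ← sum_erase_add X1 b hu1]
  ring

lemma wt_insert_erase (a b : V → ℕ) {X1 X2 : Finset V} {v : V} (hv1 : v ∉ X1) (hv2 : v ∈ X2) :
    wt G a b (insert v X1) (X2.erase v) + (X2.filter (G.Adj v)).card + a v =
      wt G a b X1 X2 + (X1.filter (G.Adj v)).card + b v := by
  rw [wt_comm, wt_comm a b X1, wt_erase_insert b a hv2 hv1]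

end Weights

section Optimal

variable {V : Type*} [Fintype V] [DecidableEq V] {G : SimpleGraph V} [DecidableRel G.Adj]
  {a b h : V → ℕ} {X1 X2 : Finset V}

lemma degenPartition_iff : DegenPartition G a b h X1 X2 ↔
    X1.Nonempty ∧ X2.Nonempty ∧ X2 = X1ᶜ ∧ ¬HasCore G (a + 1) X1 ∧ ¬HasCore G (b + h) X2 := by
  simp only [DegenPartition, not_hasCore_iff, Pi.add_apply, Pi.one_apply, Nat.lt_iff_add_one_le,
    Nat.add_le_add_iff_right, eq_compl_iff_isCompl, isCompl_comm (x := X2), isCompl_iff,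
    codisjoint_iff, sup_eq_union, top_eq_univ, and_assoc]

lemma card_filter_insert_add_card_filter_erase_eq_degree {u : V} (hX2 : X2 = X1ᶜ) (v : V) :
    ((insert u X2).filter (G.Adj v)).card + ((X1.erase u).filter (G.Adj v)).card = G.degree v := by
  rw [degree_eq_card_filter_add_card_filter_compl (X1.erase u) v, compl_erase, ← hX2, add_comm]

variable {u1 u2 : V}

lemma hasCore_insert_second_of_optimal (hdeg : ∀ u, G.degree u = a u + b u + h u)
    (hP : DegenPartition G a b h X1 X2)
    (hmaxw : ∀ Y1 Y2, DegenPartition G a b h Y1 Y2 → wt G a b Y1 Y2 ≤ wt G a b X1 X2)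
    (hminc : ∀ Y1 Y2, DegenPartition G a b h Y1 Y2 → wt G a b Y1 Y2 = wt G a b X1 X2 →
      X1.card ≤ Y1.card)
    (hu1 : u1 ∈ X1) (hd1 : (X1.filter (G.Adj u1)).card ≤ a u1) (hne : (X1.erase u1).Nonempty) :
    HasCore G (b + h) (insert u1 X2) := by
  obtain ⟨-, -, hX2, hcore1, -⟩ := degenPartition_iff.1 hP
  by_contra hfree
  have hmove : DegenPartition G a b h (X1.erase u1) (insert u1 X2) :=
    degenPartition_iff.2 ⟨hne, insert_nonempty u1 X2, by rw [compl_erase, hX2],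
      fun hc => hcore1 (hc.mono (erase_subset u1 X1)), hfree⟩
  have hgain := wt_erase_insert (G := G) (X2 := X2) a b hu1 (by simpa [hX2] using hu1)
  have hsplit := degree_eq_card_filter_add_card_filter_compl (G := G) X1 u1
  rw [← hX2, hdeg] at hsplit
  have hcard := hminc _ _ hmove (le_antisymm (hmaxw _ _ hmove) (by omega))
  exact (card_erase_lt_of_mem hu1).not_ge hcard

lemma hasCore_insert_first_of_maximal (hh : ∀ u, h u ≤ 1)
    (hdeg : ∀ u, G.degree u = a u + b u + h u) (hP : DegenPartition G a b h X1 X2)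
    (hmaxw : ∀ Y1 Y2, DegenPartition G a b h Y1 Y2 → wt G a b Y1 Y2 ≤ wt G a b X1 X2)
    (hu2 : u2 ∈ X2) (hd2 : (X2.filter (G.Adj u2)).card + 1 ≤ b u2 + h u2)
    (hne : (X2.erase u2).Nonempty) :
    HasCore G (a + 1) (insert u2 X1) := by
  obtain ⟨-, -, hX2, -, hcore2⟩ := degenPartition_iff.1 hP
  by_contra hfree
  have hmove : DegenPartition G a b h (insert u2 X1) (X2.erase u2) :=
    degenPartition_iff.2 ⟨insert_nonempty u2 X1, hne, by rw [compl_insert, hX2], hfree,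
      fun hc => hcore2 (hc.mono (erase_subset u2 X2))⟩
  have hgain := wt_insert_erase (G := G) a b (by simpa [hX2] using hu2) hu2
  have hsplit := degree_eq_card_filter_add_card_filter_compl (G := G) X1 u2
  rw [← hX2, hdeg] at hsplit
  have hle := hmaxw _ _ hmove
  have := hh u2
  omega

lemma not_hasCore_swap_first (hdeg : ∀ u, G.degree u = a u + b u + h u)
    (hnf : ¬FeasiblePair G a b) (hP : DegenPartition G a b h X1 X2)
    (hmaxw : ∀ Y1 Y2, DegenPartition G a b h Y1 Y2 → wt G a b Y1 Y2 ≤ wt G a b X1 X2)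
    (hminc : ∀ Y1 Y2, DegenPartition G a b h Y1 Y2 → wt G a b Y1 Y2 = wt G a b X1 X2 →
      X1.card ≤ Y1.card)
    (hu1 : u1 ∈ X1) (hd1 : (X1.filter (G.Adj u1)).card ≤ a u1) :
    ¬HasCore G (a + 1) (insert u2 (X1.erase u1)) := by
  obtain ⟨-, -, hX2, hcore1, -⟩ := degenPartition_iff.1 hP
  rintro ⟨A, hA, hAcore⟩
  have hu2A := hAcore.mem_of_subset_insert hA fun hc => hcore1 (hc.mono (erase_subset u1 X1))
  have hdA := hAcore.le_card_filter_of_subset_insert hA hu2A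
  rw [Pi.add_apply, Pi.one_apply] at hdA
  have hsplit := card_filter_insert_add_card_filter_erase_eq_degree (G := G) (u := u1) hX2 u2
  rw [hdeg] at hsplit
  have hne : (X1.erase u1).Nonempty :=
    (card_pos.1 (by omega : 0 < ((X1.erase u1).filter (G.Adj u2)).card)).mono (filter_subset _ _)
  refine not_isCore_of_subset_insert_erase hnf (fun x => Nat.le_succ (a x))
    (fun x => Nat.le_add_right (b x) (h x)) (hX2 ▸ disjoint_compl_right)
    (hasCore_insert_second_of_optimal hdeg hP hmaxw hminc hu1 hd1 hne) ?_ hA hAcore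
  omega

lemma not_hasCore_swap_second (hh : ∀ u, h u ≤ 1) (hdeg : ∀ u, G.degree u = a u + b u + h u)
    (hb : ∀ u, 1 ≤ b u) (hnf : ¬FeasiblePair G a b) (hP : DegenPartition G a b h X1 X2)
    (hmaxw : ∀ Y1 Y2, DegenPartition G a b h Y1 Y2 → wt G a b Y1 Y2 ≤ wt G a b X1 X2)
    (hu2 : u2 ∈ X2) (hd2 : (X2.filter (G.Adj u2)).card + 1 ≤ b u2 + h u2) :
    ¬HasCore G (b + h) (insert u1 (X2.erase u2)) := by
  obtain ⟨-, -, hX2, -, hcore2⟩ := degenPartition_iff.1 hP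
  rintro ⟨B, hB, hBcore⟩
  have hu1B := hBcore.mem_of_subset_insert hB fun hc => hcore2 (hc.mono (erase_subset u2 X2))
  have hdB := hBcore.le_card_filter_of_subset_insert hB hu1B
  rw [Pi.add_apply] at hdB
  have hsplit := card_filter_insert_add_card_filter_erase_eq_degree (G := G) (u := u2)
    (X1 := X2) (X2 := X1) (by rw [hX2, compl_compl]) u1
  rw [hdeg] at hsplit
  have hne : (X2.erase u2).Nonempty :=
    (card_pos.1 (by have := hb u1; omega : 0 < ((X2.erase u2).filter (G.Adj u1)).card)).mono
      (filter_subset _ _)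
  refine not_isCore_of_subset_insert_erase (hnf ∘ FeasiblePair.symm)
    (fun x => Nat.le_add_right (b x) (h x)) (fun x => Nat.le_succ (a x))
    (hX2 ▸ disjoint_compl_left)
    (hasCore_insert_first_of_maximal hh hdeg hP hmaxw hu2 hd2 hne) ?_ hB hBcore
  omega

end Optimal

theorem swap_preserves_optimality_general {V : Type*} [Fintype V] [DecidableEq V]
    (G : SimpleGraph V) [DecidableRel G.Adj] (a b h : V → ℕ)
    (hh : ∀ u, h u ≤ 1)
    (hdeg : ∀ u : V, G.degree u = a u + b u + h u)
    (hb : ∀ u, 1 ≤ b u)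
    (hnf : ¬ FeasiblePair G a b)
    (X1 X2 : Finset V) (hP : DegenPartition G a b h X1 X2)
    (hmaxw : ∀ Y1 Y2 : Finset V, DegenPartition G a b h Y1 Y2 →
      wt G a b Y1 Y2 ≤ wt G a b X1 X2)
    (hminc : ∀ Y1 Y2 : Finset V, DegenPartition G a b h Y1 Y2 →
      wt G a b Y1 Y2 = wt G a b X1 X2 → X1.card ≤ Y1.card)
    (u1 : V) (hu1 : u1 ∈ X1) (hd1 : (X1.filter (G.Adj u1)).card ≤ a u1)
    (u2 : V) (hu2 : u2 ∈ X2) (hd2 : (X2.filter (G.Adj u2)).card + 1 ≤ b u2 + h u2)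
    (hcase : (h u1 = 0 ∧ h u2 = 0) ∨ h u1 = 1) :
    DegenPartition G a b h (insert u2 (X1.erase u1)) (insert u1 (X2.erase u2)) ∧
    wt G a b (insert u2 (X1.erase u1)) (insert u1 (X2.erase u2)) = wt G a b X1 X2 ∧
    (insert u2 (X1.erase u1)).card = X1.card ∧
    (h u1 = 1 → h u2 = 1) := by
  obtain ⟨-, -, hX2, -, -⟩ := degenPartition_iff.1 hP
  have hu1X2 : u1 ∉ X2 := by simpa [hX2] using hu1
  have hu2X1 : u2 ∉ X1.erase u1 := fun hmem => mem_compl.1 (hX2 ▸ hu2) (mem_of_mem_erase hmem)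
  have hne : u1 ≠ u2 := by rintro rfl; exact hu1X2 hu2
  have hswap : DegenPartition G a b h (insert u2 (X1.erase u1)) (insert u1 (X2.erase u2)) :=
    degenPartition_iff.2 ⟨insert_nonempty _ _, insert_nonempty _ _,
      by rw [compl_insert, compl_erase, hX2, erase_insert_of_ne hne],
      not_hasCore_swap_first hdeg hnf hP hmaxw hminc hu1 hd1,
      not_hasCore_swap_second hh hdeg hb hnf hP hmaxw hu2 hd2⟩
  have hmove1 := wt_erase_insert (G := G) (X2 := X2) a b hu1 hu1X2
  have hmove2 := wt_insert_erase (G := G) a b hu2X1 (mem_insert_of_mem hu2 : u2 ∈ insert u1 X2)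
  rw [erase_insert_of_ne hne] at hmove2
  have hsplit1 := degree_eq_card_filter_add_card_filter_compl (G := G) X1 u1
  have hsplit2 := card_filter_insert_add_card_filter_erase_eq_degree (G := G) (u := u1) hX2 u2
  rw [← hX2] at hsplit1
  have hgrow : ((insert u1 X2).filter (G.Adj u2)).card ≤ (X2.filter (G.Adj u2)).card + 1 := by
    rw [filter_insert]
    split_ifs
    exacts [card_insert_le _ _, Nat.le_succ _]
  have hle := hmaxw _ _ hswap
  have := hdeg u1; have := hdeg u2; have := hh u1; have := hh u2
  refine ⟨hswap, by omega, by rw [card_insert_of_notMem hu2X1, card_erase_add_one hu1], by omega⟩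

/-- Swapping deficient vertices preserves optimality (Claim 8). -/
theorem swap_preserves_optimality {V : Type*} [Fintype V] [DecidableEq V]
    (G : SimpleGraph V) [DecidableRel G.Adj] (a b h : V → ℕ)
    (hh : ∀ u, h u ≤ 1)
    (hdeg : ∀ u : V, G.degree u = a u + b u + h u)
    (ha : ∀ u, 1 ≤ a u) (hb : ∀ u, 1 ≤ b u)
    (hnf : ¬ FeasiblePair G a b)
    (X1 X2 : Finset V) (hP : DegenPartition G a b h X1 X2)
    (hmaxw : ∀ Y1 Y2 : Finset V, DegenPartition G a b h Y1 Y2 →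
      wt G a b Y1 Y2 ≤ wt G a b X1 X2)
    (hminc : ∀ Y1 Y2 : Finset V, DegenPartition G a b h Y1 Y2 →
      wt G a b Y1 Y2 = wt G a b X1 X2 → X1.card ≤ Y1.card)
    (u1 : V) (hu1 : u1 ∈ X1) (hd1 : (X1.filter (G.Adj u1)).card ≤ a u1)
    (u2 : V) (hu2 : u2 ∈ X2) (hd2 : (X2.filter (G.Adj u2)).card + 1 ≤ b u2 + h u2)
    (hcase : (h u1 = 0 ∧ h u2 = 0) ∨ h u1 = 1) :
    DegenPartition G a b h (insert u2 (X1.erase u1)) (insert u1 (X2.erase u2)) ∧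
    wt G a b (insert u2 (X1.erase u1)) (insert u1 (X2.erase u2)) = wt G a b X1 X2 ∧
    (insert u2 (X1.erase u1)).card = X1.card ∧
    (h u1 = 1 → h u2 = 1) :=
  swap_preserves_optimality_general G a b h hh hdeg hb hnf X1 X2 hP hmaxw hminc u1 hu1 hd1 u2 hu2
    hd2 hcase
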